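/- arXiv:1906.04912 — 2 statements merged into one kernel-verified Lean document; each statement's English description precedes it below -/
import Mathlib

section
/- For integers n ≥ 1 and k with k ≠ 0 and k ≠ 2n, and for real t ∈ [0,ρ] with 0 < ρ, any complex number λ satisfying |λ - (2πn + t)²| ≤ 15πnρ (with 15πρ < 1) satisfies |λ - (2π(n-k) + t)²| > |k|·|2n - k|. -/
/-!
Write `A = 2πn + t` and `B = 2π(n - k) + t`. Then `A² - B² = 2πk · (2π(2n - k) + 2t)`, whose modulus
is at least `2π|k| (2π|2n - k| - 2t)`, and `λ` is within `15πnρ` of `A²`. Since `k` and `2n - k` are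
nonzero integers, `|k|, |2n - k| ≥ 1` and `n ≤ (|k| + |2n - k|)/2`, so both the shift `t ≤ ρ` and the
radius `15πnρ ≤ n` are absorbed by the factor `4π² > 36` in front of `|k| |2n - k|`.
-/

open Real

theorem Complex.norm_ofReal_sq_sub_ofReal_sq (x y : ℝ) :
    ‖(x : ℂ) ^ 2 - (y : ℂ) ^ 2‖ = |x - y| * |x + y| := by
  rw [← Complex.ofReal_pow, ← Complex.ofReal_pow, ← Complex.ofReal_sub, Complex.norm_real,
    Real.norm_eq_abs, sq_sub_sq, abs_mul, mul_comm]

theorem two_pi_mul_le_norm_sq_sub_sq_shift (n k t : ℝ) (ht : 0 ≤ t) :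
    2 * π * |k| * (2 * π * |2 * n - k| - 2 * t) ≤
      ‖((2 * π * n + t : ℝ) : ℂ) ^ 2 - ((2 * π * (n - k) + t : ℝ) : ℂ) ^ 2‖ := by
  have hdiff : |2 * π * n + t - (2 * π * (n - k) + t)| = 2 * π * |k| := by
    rw [show 2 * π * n + t - (2 * π * (n - k) + t) = 2 * π * k by ring, abs_mul,
      abs_of_pos two_pi_pos]
  have hsum : 2 * π * |2 * n - k| - 2 * t ≤ |2 * π * n + t + (2 * π * (n - k) + t)| := by
    have := abs_sub_abs_le_abs_add (2 * π * (2 * n - k)) (2 * t)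
    rwa [abs_mul, abs_of_pos two_pi_pos, abs_of_nonneg (by linarith : 0 ≤ 2 * t),
      show 2 * π * (2 * n - k) + 2 * t = 2 * π * n + t + (2 * π * (n - k) + t) by ring] at this
  rw [Complex.norm_ofReal_sq_sub_ofReal_sq, hdiff]
  exact mul_le_mul_of_nonneg_left hsum (by positivity)

theorem mul_lt_two_pi_mul_sub {a b n t ρ : ℝ} (ha : 1 ≤ a) (hb : 1 ≤ b) (hn : 0 ≤ n)
    (hnab : 2 * n ≤ a + b) (htρ : t ≤ ρ) (hρ : 15 * π * ρ ≤ 1) :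
    a * b < 2 * π * a * (2 * π * b - 2 * t) - 15 * π * n * ρ := by
  have hπ : 3 < π := pi_gt_three
  have hshift : 2 * π * a * (2 * t) ≤ 4 * a / 15 := by
    have : 4 * π * a * t ≤ 4 * π * a * ρ := by gcongr
    nlinarith
  have hn' : 15 * π * n * ρ ≤ n := by nlinarith
  have hπ2 : 36 * (a * b) ≤ 4 * π ^ 2 * (a * b) := by gcongr; nlinarith
  nlinarith [mul_le_mul ha hb zero_le_one (by linarith)]

theorem stmt_0_general (n : ℕ) (k : ℤ) (hk0 : k ≠ 0) (hk2n : k ≠ 2 * n)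
    (ρ t : ℝ) (hρ' : 15 * π * ρ < 1) (ht0 : 0 ≤ t) (htρ : t ≤ ρ)
    (lam : ℂ) (hlam : ‖lam - ((2 * π * n + t : ℝ) : ℂ) ^ 2‖ ≤ 15 * π * n * ρ) :
    ‖lam - ((2 * π * ((n : ℝ) - (k : ℝ)) + t : ℝ) : ℂ) ^ 2‖
      > |(k : ℝ)| * |2 * (n : ℝ) - (k : ℝ)| := by
  have ha : (1 : ℝ) ≤ |(k : ℝ)| := by exact_mod_cast Int.one_le_abs hk0
  have hb : (1 : ℝ) ≤ |2 * (n : ℝ) - k| := by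
    exact_mod_cast Int.one_le_abs (sub_ne_zero.mpr hk2n.symm)
  have hnab : 2 * (n : ℝ) ≤ |(k : ℝ)| + |2 * (n : ℝ) - k| := by
    simpa using abs_add_le (k : ℝ) (2 * n - k)
  have hgap := two_pi_mul_le_norm_sq_sub_sq_shift n k t ht0
  have htri := norm_sub_le_norm_sub_add_norm_sub (((2 * π * n + t : ℝ) : ℂ) ^ 2) lam
    (((2 * π * ((n : ℝ) - k) + t : ℝ) : ℂ) ^ 2)
  rw [norm_sub_rev _ lam] at htri
  have hbound := mul_lt_two_pi_mul_sub ha hb n.cast_nonneg hnab htρ hρ'.le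
  linarith

theorem stmt_0 (n : ℕ) (hn : 1 ≤ n) (k : ℤ) (hk0 : k ≠ 0) (hk2n : k ≠ 2 * n)
    (ρ t : ℝ) (hρ : 0 < ρ) (hρ' : 15 * π * ρ < 1) (ht0 : 0 ≤ t) (htρ : t ≤ ρ)
    (lam : ℂ) (hlam : ‖lam - ((2 * π * n + t : ℝ) : ℂ) ^ 2‖ ≤ 15 * π * n * ρ) :
    ‖lam - ((2 * π * ((n : ℝ) - (k : ℝ)) + t : ℝ) : ℂ) ^ 2‖
      > |(k : ℝ)| * |2 * (n : ℝ) - (k : ℝ)| :=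
  stmt_0_general n k hk0 hk2n ρ t hρ' ht0 htρ lam hlam
end

section
/- Let z, w be complex numbers with -π + δ < arg(w) < π - δ for some δ > 0 and |arg(z)| < δ/2, where z ≠ 0 or w ≠ 0 and z has nonnegative real part (arg z ∈ (-δ/2, δ/2)). Then z + w ≠ 0 and -π < arg(z + w) < π. -/
/-!
With `c` and `d` the half-sum and half-difference of `arg z` and `arg w`,
`z + w = exp (c i) * q` with `q = ‖z‖ exp (d i) + ‖w‖ exp (-d i)`, whose real part is
`(‖z‖ + ‖w‖) cos d`. If `|arg z| + |arg w| < π` then `|c|, |d| < π / 2`, so `q` lies in the open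
right half-plane and `arg (z + w) = c + arg q` stays strictly between `-π` and `π`.
-/

open Real

namespace Complex

theorem arg_exp_mul_I_of_mem_Ioc {θ : ℝ} (hθ : θ ∈ Set.Ioc (-π) π) : arg (exp (θ * I)) = θ := by
  rwa [arg_exp_mul_I, toIocMod_eq_self, show -π + 2 * π = π by ring]

theorem arg_exp_mul_I_mul {θ : ℝ} (hθ : |θ| < π / 2) {q : ℂ} (hq : 0 < q.re) :
    arg (exp (θ * I) * q) = θ + arg q := by
  obtain ⟨hθ₁, hθ₂⟩ := abs_lt.mp hθ
  obtain ⟨hq₁, hq₂⟩ := abs_lt.mp (abs_arg_lt_pi_div_two_iff.mpr (Or.inl hq))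
  have hpi := pi_pos
  have hexp : arg (exp (θ * I)) = θ := arg_exp_mul_I_of_mem_Ioc ⟨by linarith, by linarith⟩
  rw [arg_mul (exp_ne_zero _) (ne_zero_of_re_pos hq), hexp]
  rw [hexp]
  constructor <;> linarith

theorem add_eq_exp_mul_I_mul (z w : ℂ) :
    z + w = exp (((arg z + arg w) / 2 : ℝ) * I) *
      (‖z‖ * exp (((arg z - arg w) / 2 : ℝ) * I) + ‖w‖ * exp (-((arg z - arg w) / 2 : ℝ) * I)) := by
  conv_lhs => rw [← norm_mul_exp_arg_mul_I z, ← norm_mul_exp_arg_mul_I w]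
  rw [mul_add, mul_left_comm, ← exp_add, mul_left_comm, ← exp_add]
  push_cast
  ring_nf

theorem re_norm_mul_exp_add_norm_mul_exp_neg (z w : ℂ) (θ : ℝ) :
    (‖z‖ * exp (θ * I) + ‖w‖ * exp (-θ * I)).re = (‖z‖ + ‖w‖) * Real.cos θ := by
  rw [add_re, re_ofReal_mul, re_ofReal_mul, exp_ofReal_mul_I_re, ← ofReal_neg,
    exp_ofReal_mul_I_re, Real.cos_neg]
  ring

theorem add_mem_slitPlane_of_abs_arg_add_abs_arg_lt_pi {z w : ℂ} (hzw : z ≠ 0 ∨ w ≠ 0)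
    (h : |arg z| + |arg w| < π) : z + w ∈ slitPlane := by
  have := neg_abs_le (arg z); have := le_abs_self (arg z)
  have := neg_abs_le (arg w); have := le_abs_self (arg w)
  have hc : |(arg z + arg w) / 2| < π / 2 := abs_lt.mpr ⟨by linarith, by linarith⟩
  have hd : |(arg z - arg w) / 2| < π / 2 := abs_lt.mpr ⟨by linarith, by linarith⟩
  have hnorm : 0 < ‖z‖ + ‖w‖ := by
    rcases hzw with hz | hw
    · exact add_pos_of_pos_of_nonneg (norm_pos_iff.mpr hz) (norm_nonneg w)
    · exact add_pos_of_nonneg_of_pos (norm_nonneg z) (norm_pos_iff.mpr hw)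
  have hq : 0 < (‖z‖ * exp (((arg z - arg w) / 2 : ℝ) * I) +
      ‖w‖ * exp (-((arg z - arg w) / 2 : ℝ) * I)).re := by
    rw [re_norm_mul_exp_add_norm_mul_exp_neg]
    exact mul_pos hnorm (cos_pos_of_mem_Ioo (abs_lt.mp hd))
  obtain ⟨hq₁, hq₂⟩ := abs_lt.mp (abs_arg_lt_pi_div_two_iff.mpr (Or.inl hq))
  obtain ⟨hc₁, hc₂⟩ := abs_lt.mp hc
  rw [mem_slitPlane_iff_arg, add_eq_exp_mul_I_mul, arg_exp_mul_I_mul hc hq]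
  exact ⟨by linarith, mul_ne_zero (exp_ne_zero _) (ne_zero_of_re_pos hq)⟩

end Complex

theorem stmt_11_general (δ : ℝ)
    (z w : ℂ) (hz : z ≠ 0)
    (hw1 : -π + δ < w.arg) (hw2 : w.arg < π - δ)
    (hzarg : |z.arg| < δ / 2) :
    z + w ≠ 0 ∧ -π < (z + w).arg ∧ (z + w).arg < π := by
  have hw : |w.arg| < π - δ := abs_lt.mpr ⟨by linarith, hw2⟩
  obtain ⟨harg, hne⟩ := Complex.mem_slitPlane_iff_arg.mp <|
    Complex.add_mem_slitPlane_of_abs_arg_add_abs_arg_lt_pi (Or.inl hz)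
      (by linarith [abs_nonneg z.arg])
  exact ⟨hne, Complex.neg_pi_lt_arg _, (Complex.arg_le_pi _).lt_of_ne harg⟩

theorem stmt_11 (δ : ℝ) (hδ : 0 < δ) (hδ' : δ < π / 2)
    (z w : ℂ) (hz : z ≠ 0) (hw : w ≠ 0)
    (hw1 : -π + δ < w.arg) (hw2 : w.arg < π - δ)
    (hzarg : |z.arg| < δ / 2) :
    z + w ≠ 0 ∧ -π < (z + w).arg ∧ (z + w).arg < π :=
  stmt_11_general δ z w hz hw1 hw2 hzarg
end
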